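/- arXiv:1707.01010 — 5 statements merged into one kernel-verified Lean document; each statement's English description precedes it below -/
import Mathlib

section
/- If u is a nonempty word over an alphabet V with at least two letters, and u is not of the form a^n for any letter a and n ≥ 1, then at least one of the words u and ua is primitive, for every letter a ∈ V. -/
/-- `wpow v n` is the word `v` repeated `n` times. -/
def wpow {V : Type*} (v : List V) : ℕ → List V
  | 0 => []
  | n + 1 => v ++ wpow v n

/-- A word is primitive if it is nonempty and not a proper power. -/
def Primitive {V : Type*} (w : List V) : Prop :=
  w ≠ [] ∧ ∀ (v : List V) (n : ℕ), w = wpow v n → n = 1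

/-- A word is ins-robust if it is primitive and inserting any letter at any
position yields a primitive word. -/
def InsRobust {V : Type*} (w : List V) : Prop :=
  Primitive w ∧ ∀ (x y : List V) (a : V), w = x ++ y → Primitive (x ++ a :: y)

/-- `HasPeriod w p` : the word `w` is periodic with period `p`. -/
def HasPeriod {V : Type*} (w : List V) (p : ℕ) : Prop :=
  ∀ i, i + p < w.length → w[i]? = w[i + p]?

lemma wpow_length {V : Type*} (v : List V) (n : ℕ) : (wpow v n).length = n * v.length := by
  induction n with
  | zero => simp [wpow]
  | succ n ih => simp [wpow, ih]; ring

lemma wpow_succ' {V : Type*} (v : List V) (n : ℕ) : wpow v (n + 1) = wpow v n ++ v := by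
  induction n with
  | zero => simp [wpow]
  | succ n ih =>
    calc wpow v (n + 1 + 1) = v ++ wpow v (n + 1) := rfl
      _ = v ++ (wpow v n ++ v) := by rw [ih]
      _ = (v ++ wpow v n) ++ v := by simp
      _ = wpow v (n + 1) ++ v := rfl

lemma hasPeriod_wpow {V : Type*} (v : List V) (n : ℕ) : HasPeriod (wpow v n) v.length := by
  intro i hi
  rcases Nat.eq_zero_or_pos v.length with hv | hv
  · simp [hv]
  rw [wpow_length] at hi
  have hn : 2 ≤ n := by nlinarith [hi, hv]
  obtain ⟨m, rfl⟩ : ∃ m, n = m + 1 := ⟨n - 1, by omega⟩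
  have hlt : i < (wpow v m).length := by rw [wpow_length]; nlinarith
  have h1 : (wpow v (m + 1))[i]? = (wpow v m)[i]? := by
    rw [wpow_succ', List.getElem?_append_left hlt]
  have h2 : (wpow v (m + 1))[i + v.length]? = (wpow v m)[i]? := by
    show (v ++ wpow v m)[i + v.length]? = _
    rw [List.getElem?_append_right (by omega)]
    congr 1; omega
  rw [h1, h2]

lemma hasPeriod_prefix {V : Type*} {l t : List V} {p : ℕ} (h : HasPeriod (l ++ t) p) :
    HasPeriod l p := by
  intro i hi
  have := h i (by simp; omega)
  rwa [List.getElem?_append_left (by omega), List.getElem?_append_left hi] at this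

lemma period_sub {V : Type*} {w : List V} {p q : ℕ} (hp : HasPeriod w p) (hq : HasPeriod w q)
    (hpq : p ≤ q) (hlen : p + q ≤ w.length) : HasPeriod w (q - p) := by
  intro i hi
  by_cases hc : i + q < w.length
  · have h1 := hq i hc
    have h2 := hp (i + (q - p)) (by omega)
    rw [h1, h2]; congr 1; omega
  · have h1 := hp (i - p) (by omega)
    have h2 := hq (i - p) (by omega)
    have e1 : i - p + p = i := by omega
    have e2 : i - p + q = i + (q - p) := by omega
    rw [e1] at h1; rw [e2] at h2
    rw [← h1, h2]

lemma fine_wilf_aux {V : Type*} (w : List V) :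
    ∀ s p q, p + q ≤ s → p + q ≤ w.length → HasPeriod w p → HasPeriod w q →
      HasPeriod w (Nat.gcd p q) := by
  intro s
  induction s with
  | zero =>
    intro p q hs _ hp _
    have hp0 : p = 0 := by omega
    have hq0 : q = 0 := by omega
    simpa [hp0, hq0] using hp
  | succ s ih =>
    intro p q hs hl hp hq
    rcases Nat.eq_zero_or_pos p with hp0 | hp0
    · simpa [hp0] using hq
    rcases Nat.eq_zero_or_pos q with hq0 | hq0
    · simpa [hq0] using hp
    rcases le_total p q with hle | hle
    · rcases eq_or_lt_of_le hle with heq | hlt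
      · subst heq; simpa using hp
      · have hsub := period_sub hp hq hle hl
        have := ih p (q - p) (by omega) (by omega) hp hsub
        have hg : Nat.gcd p (q - p) = Nat.gcd p q := Nat.gcd_sub_self_right hle
        rwa [hg] at this
    · rcases eq_or_lt_of_le hle with heq | hlt
      · subst heq; simpa using hp
      · have hsub := period_sub hq hp hle (by omega)
        have := ih q (p - q) (by omega) (by omega) hq hsub
        have hg : Nat.gcd q (p - q) = Nat.gcd q p := Nat.gcd_sub_self_right hle
        rw [hg, Nat.gcd_comm] at this
        exact this

lemma wpow_single {V : Type*} (a : V) (n : ℕ) : wpow [a] n = List.replicate n a := by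
  induction n with
  | zero => rfl
  | succ n ih => simp [wpow, ih, List.replicate_succ]

lemma nonprim_decomp {V : Type*} {u : List V} (hu : u ≠ []) (hnp : ¬ Primitive u) :
    ∃ v n, u = wpow v n ∧ 2 ≤ n ∧ 1 ≤ v.length := by
  unfold Primitive at hnp
  push_neg at hnp
  obtain ⟨v, n, huv, hn⟩ := hnp hu
  have hn0 : n ≠ 0 := by rintro rfl; exact hu (by simpa [wpow] using huv)
  have hv : v ≠ [] := by
    rintro rfl
    apply hu
    have : (wpow ([] : List V) n).length = 0 := by simp [wpow_length]
    rw [huv]; exact List.eq_nil_of_length_eq_zero this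
  exact ⟨v, n, huv, by omega, by
    have := List.length_pos_iff.mpr hv; omega⟩

theorem stmt0 {V : Type*} (hV : ∃ a b : V, a ≠ b) (u : List V) (hu : u ≠ [])
    (h : ∀ (a : V) (n : ℕ), 1 ≤ n → u ≠ wpow [a] n) (a : V) :
    Primitive u ∨ Primitive (u ++ [a]) := by
  by_contra hcon
  push_neg at hcon
  obtain ⟨hnp1, hnp2⟩ := hcon
  obtain ⟨v, n, huv, hn, hv⟩ := nonprim_decomp hu hnp1
  obtain ⟨w, m, huw, hm, hw⟩ := nonprim_decomp (by simp) hnp2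
  set p := v.length with hp
  set q := w.length with hq
  have hLp : u.length = n * p := by rw [huv, wpow_length]
  have hLq : u.length + 1 = m * q := by
    have := congrArg List.length huw
    simpa [wpow_length] using this
  have hperp : HasPeriod u p := by rw [huv]; exact hasPeriod_wpow v n
  have hperq : HasPeriod u q := by
    have : HasPeriod (u ++ [a]) q := by rw [huw]; exact hasPeriod_wpow w m
    exact hasPeriod_prefix this
  have hsum : p + q ≤ u.length := by nlinarith
  have hgcd := fine_wilf_aux u (p + q) p q le_rfl hsum hperp hperq
  have hg1 : Nat.gcd p q = 1 := by
    have h1 : Nat.gcd p q ∣ u.length :=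
      dvd_trans (Nat.gcd_dvd_left p q) ⟨n, by rw [hLp, Nat.mul_comm]⟩
    have h2 : Nat.gcd p q ∣ u.length + 1 :=
      dvd_trans (Nat.gcd_dvd_right p q) ⟨m, by rw [hLq, Nat.mul_comm]⟩
    have hd : Nat.gcd p q ∣ 1 := by
      have := Nat.dvd_sub h2 h1
      simpa using this
    exact Nat.dvd_one.mp hd
  rw [hg1] at hgcd
  -- u has period 1, so all letters equal
  obtain ⟨b, l, rfl⟩ : ∃ b l, u = b :: l := by
    cases u with
    | nil => exact absurd rfl hu
    | cons b l => exact ⟨b, l, rfl⟩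
  have hconst : ∀ i, (b :: l)[i]? = ((b :: l)[0]?) ∨ (b :: l).length ≤ i := by
    intro i
    induction i with
    | zero => left; rfl
    | succ i ih =>
      rcases ih with hi | hi
      · by_cases hlt : i + 1 < (b :: l).length
        · left; rw [← hgcd i hlt]; exact hi
        · right; omega
      · right; omega
  apply h b (b :: l).length (by simp)
  rw [wpow_single]
  apply List.ext_getElem?
  intro i
  rcases hconst i with hi | hi
  · rw [hi]
    rw [List.getElem?_replicate]
    have : i < (b :: l).length := by
      by_contra hge
      rw [List.getElem?_eq_none (by omega)] at hi
      simp at hi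
    simp only [List.length_cons] at this
    simp [this]
  · rw [List.getElem?_eq_none (by omega), List.getElem?_eq_none (by simpa using hi)]
end

section
/- The language Q_I of ins-robust primitive words is reflective: if xy is ins-robust primitive, then yx is ins-robust primitive. -/
lemma wpow_nil {V : Type*} (n : ℕ) : wpow ([] : List V) n = [] := by
  induction n with
  | zero => rfl
  | succ n ih => simpa [wpow] using ih

lemma wpow_cons {V : Type*} (b : V) (v' : List V) (m : ℕ) :
    wpow (b :: v') (m + 1) = b :: (wpow (v' ++ [b]) m ++ v') := by
  induction m with
  | zero => simp [wpow]
  | succ k ih =>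
    rw [wpow_succ', ih, wpow_succ']
    simp [List.append_assoc]

lemma rot_one {V : Type*} (a : V) (z v : List V) (n : ℕ)
    (h : a :: z = wpow v n) : ∃ w : List V, z ++ [a] = wpow w n := by
  cases n with
  | zero => simp [wpow] at h
  | succ m =>
    cases v with
    | nil => rw [wpow_nil] at h; simp at h
    | cons b v' =>
      rw [wpow_cons] at h
      obtain ⟨rfl, rfl⟩ : a = b ∧ z = wpow (v' ++ [b]) m ++ v' := by
        constructor
        · exact (List.cons.injEq _ _ _ _ ▸ h).1
        · exact (List.cons.injEq _ _ _ _ ▸ h).2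
      refine ⟨v' ++ [a], ?_⟩
      rw [wpow_succ', List.append_assoc]

lemma rot_pow {V : Type*} : ∀ (y x v : List V) (n : ℕ),
    y ++ x = wpow v n → ∃ w : List V, x ++ y = wpow w n := by
  intro y
  induction y with
  | nil => intro x v n h; exact ⟨v, by simpa using h⟩
  | cons a y' ih =>
    intro x v n h
    have h1 : a :: (y' ++ x) = wpow v n := by simpa using h
    obtain ⟨w, hw⟩ := rot_one a (y' ++ x) v n h1
    have h2 : y' ++ (x ++ [a]) = wpow w n := by
      simpa [List.append_assoc] using hw
    obtain ⟨w', hw'⟩ := ih (x ++ [a]) w n h2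
    exact ⟨w', by simpa [List.append_assoc] using hw'⟩

lemma primitive_rot {V : Type*} (x y : List V) (h : Primitive (x ++ y)) :
    Primitive (y ++ x) := by
  constructor
  · intro he
    rcases List.append_eq_nil_iff.mp he with ⟨hy, hx⟩
    exact h.1 (by simp [hx, hy])
  · intro v n hv
    obtain ⟨w, hw⟩ := rot_pow y x v n hv
    exact h.2 w n hw

lemma split_rot {V : Type*} (x y u v : List V) (h : u ++ v = y ++ x) :
    ∃ s t : List V, x ++ y = s ++ t ∧ v ++ u = t ++ s := by
  rcases List.append_eq_append_iff.mp h with ⟨w, hy, hv⟩ | ⟨w, hu, hx⟩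
  · exact ⟨x ++ u, w, by simp [hy, List.append_assoc],
      by simp [hv, List.append_assoc]⟩
  · exact ⟨w, v ++ y, by simp [hx, List.append_assoc],
      by simp [hu, List.append_assoc]⟩

theorem stmt5 {V : Type*} (x y : List V) (h : InsRobust (x ++ y)) :
    InsRobust (y ++ x) := by
  obtain ⟨hp, hins⟩ := h
  refine ⟨primitive_rot x y hp, ?_⟩
  intro u v a huv
  obtain ⟨s, t, hst, hts⟩ := split_rot x y u v huv.symm
  have h1 : Primitive (s ++ a :: t) := hins s t a hst
  have h2 : Primitive ((a :: t) ++ s) := primitive_rot s (a :: t) h1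
  have h3 : Primitive ((a :: v) ++ u) := by
    have : (a :: t) ++ s = (a :: v) ++ u := by
      simp [hts]
    rwa [this] at h2
  simpa using primitive_rot (a :: v) u h3
end

section
/- The language Q_I of ins-robust primitive words is dense: for every word w ∈ V* there exist words x, y ∈ V* such that xwy is an ins-robust primitive word. -/
lemma wpow_count {V : Type*} [DecidableEq V] (v : List V) (n : ℕ) (c : V) :
    (wpow v n).count c = n * v.count c := by
  induction n with
  | zero => simp [wpow]
  | succ n ih => simp [wpow, List.count_append, ih]; ring

lemma primitive_of_coprime {V : Type*} [DecidableEq V] {w : List V} (hw : w ≠ [])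
    (a b : V) (h : Nat.Coprime (w.count a) (w.count b)) : Primitive w := by
  refine ⟨hw, fun v n hn => ?_⟩
  have h1 : n ∣ w.count a := ⟨v.count a, by rw [hn, wpow_count]⟩
  have h2 : n ∣ w.count b := ⟨v.count b, by rw [hn, wpow_count]⟩
  have := Nat.dvd_gcd h1 h2
  rw [h] at this
  exact Nat.dvd_one.mp this

theorem stmt11 {V : Type*} (hV : ∃ a b : V, a ≠ b) (w : List V) :
    ∃ x y : List V, InsRobust (x ++ w ++ y) := by
  classical
  obtain ⟨a, b, hab⟩ := hV
  set N := w.count a with hN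
  set M := w.count b with hM
  set A := 2 * N + 1 with hA
  set B := A * ((A + 1) * (M + 1)) + 1 with hB
  have hAodd : Odd A := ⟨N, by omega⟩
  have hBM : M < B := by
    have h0 : M + 1 ≤ (A + 1) * (M + 1) := Nat.le_mul_of_pos_left _ (by omega)
    have h0' : (A + 1) * (M + 1) ≤ A * ((A + 1) * (M + 1)) := Nat.le_mul_of_pos_left _ (by omega)
    omega
  have h1 : Nat.Coprime A B := by
    rw [hB]
    rw [Nat.coprime_mul_left_add_right]
    exact Nat.coprime_one_right A
  have h2 : Nat.Coprime (A + 1) B := by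
    have : B = (A + 1) * (A * (M + 1)) + 1 := by rw [hB]; ring
    rw [this, Nat.coprime_mul_left_add_right]
    exact Nat.coprime_one_right _
  have h3 : Nat.Coprime A (B + 1) := by
    have : B + 1 = A * ((A + 1) * (M + 1)) + 2 := by rw [hB]
    rw [this, Nat.coprime_mul_left_add_right]
    exact hAodd.coprime_two_right
  refine ⟨List.replicate (B - M) b, List.replicate (N + 1) a, ?_, ?_⟩
  · -- counts of u
    have hca : (List.replicate (B - M) b ++ w ++ List.replicate (N + 1) a).count a = A := by
      simp [List.count_append, List.count_replicate, hab, Ne.symm hab, ← hN]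
      omega
    have hcb : (List.replicate (B - M) b ++ w ++ List.replicate (N + 1) a).count b = B := by
      simp [List.count_append, List.count_replicate, hab, Ne.symm hab, ← hM]
      omega
    apply primitive_of_coprime (by simp) a b
    rw [hca, hcb]; exact h1
  · intro p q c h
    have hcount : ∀ d : V,
        (p ++ c :: q).count d
          = (List.replicate (B - M) b ++ w ++ List.replicate (N + 1) a).count d
            + if c = d then 1 else 0 := by
      intro d
      rw [h]
      simp [List.count_append, List.count_cons]
      split <;> omega
    have hca := hcount a
    have hcb := hcount b
    have hua : (List.replicate (B - M) b ++ w ++ List.replicate (N + 1) a).count a = A := by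
      simp [List.count_append, List.count_replicate, hab, Ne.symm hab, ← hN]
      omega
    have hub : (List.replicate (B - M) b ++ w ++ List.replicate (N + 1) a).count b = B := by
      simp [List.count_append, List.count_replicate, hab, Ne.symm hab, ← hM]
      omega
    rw [hua] at hca
    rw [hub] at hcb
    apply primitive_of_coprime (by simp) a b
    rw [hca, hcb]
    by_cases hc1 : c = a
    · subst hc1
      simp [hab]
      exact h2
    · by_cases hc2 : c = b
      · subst hc2
        simp [hc1]
        exact h3
      · simp [hc1, hc2]
        exact h1
end

section
/- The language Q_I of ins-robust primitive words over an alphabet with at least two letters is not regular. -/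
/-!
A word `x b y b z` with `x, y, z` free of `b` can only be a proper power as a square, which
forces `y = z ++ x`; likewise `x b y b z b t` can only be a cube, which forces `y = z = t ++ x`.
Hence `a ^ m b a ^ n b` with `m + 2 ≤ n ≠ 2m` is ins-robust: inserting a letter other than `b`
moves one gap length by one, and inserting a `b` splits a gap in a way that cannot produce three
equal gaps. Choosing `m` beyond the number of states and `n = m + m !`, the pumping lemma pumps
the leading block `a ^ m` up to `a ^ n`, giving the square `(a ^ n b)²`, which is not primitive.
-/

open List Computability

section Words

variable {V : Type*}

theorem count_wpow [DecidableEq V] (v : List V) (c : V) (n : ℕ) :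
    (wpow v n).count c = n * v.count c := by
  induction n with
  | zero => simp [wpow]
  | succ n ih => simp [wpow, ih, Nat.succ_mul, Nat.add_comm]

theorem not_primitive_append_self (v : List V) : ¬ Primitive (v ++ v) :=
  fun h => absurd (h.2 v 2 (by simp [wpow])) (by norm_num)

theorem primitive_of_count_prime [DecidableEq V] {w : List V} {b : V} (hp : (w.count b).Prime)
    (h : ∀ v : List V, v.count b = 1 → w ≠ wpow v (w.count b)) : Primitive w := by
  refine ⟨by rintro rfl; exact Nat.not_prime_zero hp, fun v n hw => ?_⟩
  have hcount : w.count b = n * v.count b := by rw [hw, count_wpow]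
  rcases hp.eq_one_or_self_of_dvd n (Dvd.intro _ hcount.symm) with hn | hn
  · exact hn
  · have hv : v.count b = 1 := by
      rw [← hn] at hcount
      exact (Nat.mul_eq_left (by rw [hn]; exact hp.ne_zero)).mp hcount.symm
    exact absurd (hn ▸ hw) (h v hv)

theorem exists_eq_append_cons_of_count_eq_one [DecidableEq V] {v : List V} {b : V}
    (h : v.count b = 1) : ∃ xs ys, v = xs ++ b :: ys ∧ b ∉ xs ∧ b ∉ ys := by
  obtain ⟨xs, ys, rfl⟩ := List.append_of_mem (List.count_pos_iff.mp (h ▸ Nat.one_pos))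
  simp only [List.count_append, List.count_cons_self] at h
  exact ⟨xs, ys, rfl, List.count_eq_zero.mp (by omega), List.count_eq_zero.mp (by omega)⟩

theorem append_cons_inj_of_notMem_prefixes {x₁ x₂ z₁ z₂ : List V} {b : V} (h₁ : b ∉ x₁)
    (h₂ : b ∉ x₂) (h : x₁ ++ b :: z₁ = x₂ ++ b :: z₂) : x₁ = x₂ ∧ z₁ = z₂ := by
  rcases List.append_eq_append_iff.mp h with ⟨_ | ⟨c, as⟩, rfl, hz⟩ | ⟨_ | ⟨c, bs⟩, rfl, hz⟩
  · simpa using hz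
  · simp only [List.cons_append, List.cons.injEq] at hz
    simp [← hz.1] at h₂
  · simpa using hz.symm
  · simp only [List.cons_append, List.cons.injEq] at hz
    simp [← hz.1] at h₁

end Words

section Shapes

variable {V : Type*} [DecidableEq V] {b : V} {x y z t : List V}

theorem eq_of_append_self_eq {v : List V} (hv : v.count b = 1) (hx : b ∉ x) (hy : b ∉ y)
    (h : v ++ v = x ++ b :: (y ++ b :: z)) : y = z ++ x := by
  obtain ⟨xs, ys, rfl, hxs, hys⟩ := exists_eq_append_cons_of_count_eq_one hv
  obtain ⟨rfl, h⟩ := append_cons_inj_of_notMem_prefixes hxs hx (by simpa using h)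
  obtain ⟨rfl, rfl⟩ := append_cons_inj_of_notMem_prefixes (x₁ := ys ++ xs) (by simp [hxs, hys]) hy
    (by simpa using h)
  rfl

theorem eq_of_append_self_append_self_eq {v : List V} (hv : v.count b = 1) (hx : b ∉ x)
    (hy : b ∉ y) (hz : b ∉ z) (h : v ++ (v ++ v) = x ++ b :: (y ++ b :: (z ++ b :: t))) :
    y = t ++ x ∧ z = t ++ x := by
  obtain ⟨xs, ys, rfl, hxs, hys⟩ := exists_eq_append_cons_of_count_eq_one hv
  obtain ⟨rfl, h⟩ := append_cons_inj_of_notMem_prefixes hxs hx (by simpa using h)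
  obtain ⟨rfl, h⟩ := append_cons_inj_of_notMem_prefixes (x₁ := ys ++ xs) (by simp [hxs, hys]) hy
    (by simpa using h)
  obtain ⟨rfl, rfl⟩ := append_cons_inj_of_notMem_prefixes (x₁ := ys ++ xs) (by simp [hxs, hys]) hz
    (by simpa using h)
  exact ⟨rfl, rfl⟩

theorem primitive_append_cons_append_cons (hx : b ∉ x) (hy : b ∉ y) (hz : b ∉ z)
    (hlen : y.length ≠ z.length + x.length) : Primitive (x ++ b :: (y ++ b :: z)) := by
  have hcount : (x ++ b :: (y ++ b :: z)).count b = 2 := by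
    simp [List.count_eq_zero.mpr hx, List.count_eq_zero.mpr hy, List.count_eq_zero.mpr hz]
  refine primitive_of_count_prime (hcount ▸ Nat.prime_two) fun v hv hw => hlen ?_
  rw [hcount] at hw
  simp [eq_of_append_self_eq hv hx hy (by simpa [wpow] using hw.symm)]

theorem primitive_append_cons_append_cons_append_cons (hx : b ∉ x) (hy : b ∉ y) (hz : b ∉ z)
    (ht : b ∉ t) (hlen : ¬ (y.length = t.length + x.length ∧ z.length = t.length + x.length)) :
    Primitive (x ++ b :: (y ++ b :: (z ++ b :: t))) := by
  have hcount : (x ++ b :: (y ++ b :: (z ++ b :: t))).count b = 3 := by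
    simp [List.count_eq_zero.mpr hx, List.count_eq_zero.mpr hy, List.count_eq_zero.mpr hz,
      List.count_eq_zero.mpr ht]
  refine primitive_of_count_prime (hcount ▸ Nat.prime_three) fun v hv hw => hlen ?_
  rw [hcount] at hw
  obtain ⟨rfl, rfl⟩ := eq_of_append_self_append_self_eq hv hx hy hz (by simpa [wpow] using hw.symm)
  simp

end Shapes

section Insertion

variable {V : Type*}

theorem append_eq_append_cons {x y A B : List V} {b : V} (h : x ++ y = A ++ b :: B) :
    (∃ A₂, A = x ++ A₂ ∧ y = A₂ ++ b :: B) ∨ (∃ B₁, x = A ++ b :: B₁ ∧ B = B₁ ++ y) := by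
  rcases List.append_eq_append_iff.mp h with ⟨A₂, hA, hy⟩ | ⟨_ | ⟨c, B₁⟩, hx, hB⟩
  · exact .inl ⟨A₂, hA, hy⟩
  · exact .inl ⟨[], by simpa using hx.symm, by simpa using hB.symm⟩
  · simp only [List.cons_append, List.cons.injEq] at hB
    obtain ⟨rfl, hB⟩ := hB
    exact .inr ⟨B₁, hx, hB⟩

theorem insRobust_append_cons_append_singleton [DecidableEq V] {A B : List V} {b : V}
    (hA : b ∉ A) (hB : b ∉ B) (hlen : A.length + 2 ≤ B.length) (hne : B.length ≠ 2 * A.length) :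
    InsRobust (A ++ b :: (B ++ [b])) := by
  refine ⟨primitive_append_cons_append_cons hA hB (by simp) (by simp; omega), fun x y c h => ?_⟩
  rcases append_eq_append_cons h.symm with ⟨A₂, rfl, rfl⟩ | ⟨B₁, rfl, hB₁⟩
  · simp only [List.length_append] at hlen hne
    by_cases hc : c = b
    · subst hc
      exact primitive_append_cons_append_cons_append_cons (by simp_all) (by simp_all) hB
        (by simp) (by simp; omega)
    · simpa using primitive_append_cons_append_cons (x := x ++ c :: A₂) (by simp_all [Ne.symm hc])
        hB (by simp) (by simp; omega)
  · rcases append_eq_append_cons hB₁.symm with ⟨B₂, rfl, rfl⟩ | ⟨C₁, rfl, hC⟩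
    · simp only [List.length_append] at hlen hne
      by_cases hc : c = b
      · subst hc
        simpa using primitive_append_cons_append_cons_append_cons hA (by simp_all) (by simp_all)
          (by simp) (by simp; omega)
      · simpa using primitive_append_cons_append_cons (y := B₁ ++ c :: B₂) hA
          (by simp_all [Ne.symm hc]) (by simp) (by simp; omega)
    · obtain ⟨rfl, rfl⟩ := List.append_eq_nil_iff.mp hC.symm
      by_cases hc : c = b
      · subst hc
        simpa using primitive_append_cons_append_cons_append_cons (z := []) (t := []) hA hB
          (by simp) (by simp) (by simp; omega)
      · simpa using primitive_append_cons_append_cons (z := [c]) hA hB (by simp [Ne.symm hc])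
          (by simp; omega)

end Insertion

section Pumping

variable {V : Type*}

theorem append_flatten_replicate_append_mem (u v z : List V) (j : ℕ) :
    u ++ (replicate j v).flatten ++ z ∈ ({u} * {v}∗ * {z} : Language V) :=
  Language.mem_mul.mpr ⟨_, Language.mem_mul.mpr ⟨u, rfl, _,
    Language.join_mem_kstar fun _ hw => List.eq_of_mem_replicate hw, rfl⟩, z, rfl, rfl⟩

theorem exists_eq_replicate_of_append_append_eq {u v z s : List V} {a : V} {m : ℕ}
    (h : u ++ v ++ z = replicate m a ++ s) (hlen : u.length + v.length ≤ m) :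
    ∃ i k, u = replicate i a ∧ v = replicate k a ∧ z = replicate (m - i - k) a ++ s := by
  obtain ⟨r, hr, rfl⟩ : ∃ r, u ++ v ++ r = replicate m a ∧ z = r ++ s := by
    rcases List.append_eq_append_iff.mp h with ⟨r, hr, rfl⟩ | ⟨r, huv, rfl⟩
    · exact ⟨r, hr.symm, rfl⟩
    · have hr : r = [] := by
        have := congrArg List.length huv
        simp only [List.length_append, List.length_replicate] at this
        exact List.eq_nil_of_length_eq_zero (by omega)
      subst hr
      exact ⟨[], by simpa using huv, rfl⟩
  obtain ⟨hlen', huv, hr⟩ := List.append_eq_replicate_iff.mp hr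
  obtain ⟨-, hu, hv⟩ := List.append_eq_replicate_iff.mp huv
  refine ⟨u.length, v.length, hu, hv, ?_⟩
  rw [hr]
  simp only [List.length_append] at hlen'
  congr 2
  omega

end Pumping

theorem stmt12 {V : Type*} (hV : ∃ a b : V, a ≠ b) :
    ¬ Language.IsRegular {w : List V | InsRobust w} := by
  classical
  obtain ⟨a, b, hab⟩ := hV
  rintro ⟨σ, _, M, hM⟩
  set m := Fintype.card σ + 3
  -- every pumping length `k ≤ m` divides `m !`, so the leading block `a ^ m` pumps up to `a ^ n`
  set n := m + m.factorial
  have hm : m < m.factorial := Nat.lt_factorial_self (by omega)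
  have hw : replicate m a ++ b :: (replicate n a ++ [b]) ∈ M.accepts := by
    rw [hM]
    exact insRobust_append_cons_append_singleton (by simp [Ne.symm hab]) (by simp [Ne.symm hab])
      (by simp; omega) (by simp; omega)
  obtain ⟨u, v, z, hsplit, hlen, hv, hpump⟩ := M.pumping_lemma hw (by simp; omega)
  obtain ⟨i, k, rfl, rfl, rfl⟩ := exists_eq_replicate_of_append_append_eq hsplit.symm (by omega)
  have hk : 0 < k := by simpa [List.replicate_eq_nil_iff, Nat.pos_iff_ne_zero] using hv
  have hik : i + k ≤ m := by simp only [List.length_replicate] at hlen; omega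
  have hdvd : k ∣ m.factorial := Nat.dvd_factorial hk (by omega)
  have hpumped := hpump (append_flatten_replicate_append_mem _ _ _ (m.factorial / k + 1))
  rw [hM] at hpumped
  refine not_primitive_append_self (replicate n a ++ [b]) ?_
  convert hpumped.1 using 1
  have hj : (m.factorial / k + 1) * k = m.factorial + k := by
    rw [Nat.add_mul, Nat.div_mul_cancel hdvd, one_mul]
  rw [List.flatten_replicate_replicate, hj, List.append_assoc, List.singleton_append,
    List.replicate_append_replicate, ← List.append_assoc, List.replicate_append_replicate]
  congr 2
  omega
end

section
/- The number of primitive but non-ins-robust words of length n ≥ 2 over alphabet V satisfies |Q_{\bar I}(n)| ≤ (n+1)·(|Z(n+1)| − |V|), where Z(n+1) is the set of non-primitive words of length n+1. -/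
/-!
Deleting the inserted letter maps every witness `x ++ a :: y` of non-ins-robustness of `w`
back to `w`, so the primitive non-ins-robust words of length `n` are covered by the
`n + 1` possible deletions applied to non-primitive words of length `n + 1`. A constant
word `b ^ (n + 1)` never occurs as such a witness, since deleting a letter from it gives
`b ^ n`, which is not primitive for `n ≥ 2`; this removes `|V|` words from `Z(n + 1)`.
-/

open Set

section Words

variable {V : Type*}

lemma wpow_singleton (a : V) : ∀ m, wpow [a] m = List.replicate m a
  | 0 => rfl
  | m + 1 => by simp [wpow, wpow_singleton a m, List.replicate_succ]

lemma not_primitive_replicate {m : ℕ} (hm : m ≠ 1) (a : V) :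
    ¬ Primitive (List.replicate m a) :=
  fun h => hm (h.2 [a] m (wpow_singleton a m).symm)

lemma Primitive.append_cons_ne_replicate {x y : List V} (hw : Primitive (x ++ y))
    (hlen : 2 ≤ (x ++ y).length) (a b : V) (m : ℕ) : x ++ a :: y ≠ List.replicate m b := by
  intro h
  have hconst : x ++ y = List.replicate (x ++ y).length b := by
    refine List.eq_replicate_iff.2 ⟨rfl, fun c hc => List.eq_of_mem_replicate (n := m) ?_⟩
    rw [← h]
    simp only [List.mem_append, List.mem_cons] at hc ⊢
    tauto
  rw [hconst] at hw
  exact not_primitive_replicate (by omega) b hw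

lemma exists_eq_eraseIdx_of_not_insRobust {w : List V} (hw : Primitive w)
    (hlen : 2 ≤ w.length) (hr : ¬ InsRobust w) :
    ∃ i < w.length + 1, ∃ u ∈ {u : List V | u.length = w.length + 1 ∧ ¬ Primitive u} \
      range (List.replicate (w.length + 1)), w = u.eraseIdx i := by
  obtain ⟨x, y, a, rfl, hnp⟩ : ∃ x y a, w = x ++ y ∧ ¬ Primitive (x ++ a :: y) := by
    simpa [InsRobust, hw] using hr
  refine ⟨x.length, by simp, x ++ a :: y, ⟨⟨by simp; omega, hnp⟩, ?_⟩, ?_⟩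
  · rintro ⟨b, hb⟩
    exact hw.append_cons_ne_replicate hlen a b _ hb.symm
  · simp [List.eraseIdx_append_of_length_le]

end Words

lemma ncard_le_mul_ncard_of_forall_eq_eraseIdx {α : Type*} {s t : Set (List α)} {k : ℕ}
    (ht : t.Finite) (h : ∀ w ∈ s, ∃ i < k, ∃ u ∈ t, w = u.eraseIdx i) :
    s.ncard ≤ k * t.ncard := by
  have hfin : (Iio k ×ˢ t).Finite := (finite_Iio k).prod ht
  calc s.ncard ≤ ((fun p : ℕ × List α => p.2.eraseIdx p.1) '' (Iio k ×ˢ t)).ncard := by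
        refine ncard_le_ncard ?_ (hfin.image _)
        intro w hw
        obtain ⟨i, hi, u, hu, rfl⟩ := h w hw
        exact ⟨(i, u), ⟨hi, hu⟩, rfl⟩
    _ ≤ (Iio k ×ˢ t).ncard := ncard_image_le hfin
    _ = k * t.ncard := by rw [ncard_prod, ncard_Iio_nat]

theorem stmt17 {V : Type*} [Fintype V] (n : ℕ) (hn : 2 ≤ n) :
    Nat.card {w : List V // w.length = n ∧ Primitive w ∧ ¬ InsRobust w} ≤
      (n + 1) *
        (Nat.card {w : List V // w.length = n + 1 ∧ ¬ Primitive w} - Fintype.card V) := by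
  set Z := {w : List V | w.length = n + 1 ∧ ¬ Primitive w}
  have hconst : range (List.replicate (n + 1)) ⊆ Z := by
    rintro _ ⟨a, rfl⟩
    exact ⟨List.length_replicate, not_primitive_replicate (by omega) a⟩
  have hcard_const : (range (List.replicate (n + 1) : V → List V)).ncard = Fintype.card V := by
    rw [ncard_range_of_injective (List.replicate_right_injective (by omega)),
      Nat.card_eq_fintype_card]
  have hcover : {w : List V | w.length = n ∧ Primitive w ∧ ¬ InsRobust w}.ncard ≤
      (n + 1) * (Z \ range (List.replicate (n + 1))).ncard := by
    refine ncard_le_mul_ncard_of_forall_eq_eraseIdx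
      (((List.finite_length_eq V (n + 1)).subset fun _ hw => hw.1).sdiff) ?_
    rintro w ⟨rfl, hw, hr⟩
    exact exists_eq_eraseIdx_of_not_insRobust hw hn hr
  rw [ncard_sdiff hconst, hcard_const] at hcover
  rw [← Nat.card_coe_set_eq, ← Nat.card_coe_set_eq] at hcover
  exact hcover
end
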